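/- arXiv:math/0411387 — 2 statements merged into one kernel-verified Lean document; each statement's English description precedes it below -/
import Mathlib

section
/- Let 1^m denote the word of length m with all letters 1. For every parking function a of length n, (a * 1^n) * 1^n = a * 1^n; and for every composition (m_1,…,m_r) of n, the multiset { c * 1^n : c ∈ 1^{m_1} ⋒ ⋯ ⋒ 1^{m_r} } equals the multiset 1^{m_1} ⋒ ⋯ ⋒ 1^{m_r} itself. (Hence the map f ↦ f * J_n is a projector onto Sym_n, the span of the products J_{m_1}⋯J_{m_r}.) -/
open List

/-- `sortW w` is the nondecreasing rearrangement `w↑` of the word `w`. -/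
def sortW (w : List ℕ) : List ℕ := w.mergeSort (fun a b => decide (a ≤ b))

/-- `a` is a parking function: a word over the positive integers whose
nondecreasing rearrangement `a↑ = a'₁ ⋯ a'ₙ` satisfies `a'ᵢ ≤ i` for all `i`. -/
def IsPF (a : List ℕ) : Prop :=
  (∀ x ∈ a, 1 ≤ x) ∧ ∀ i, i < a.length → (sortW a).getD i 0 ≤ i + 1

/-- `dW w = min { i ≥ 1 : #{j : wⱼ ≤ i} < i }`. -/
noncomputable def dW (w : List ℕ) : ℕ := sInf {i | 1 ≤ i ∧ w.countP (fun x => decide (x ≤ i)) < i}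

/-- Decrement by one every letter strictly greater than `d`. -/
def decAbove (d : ℕ) (w : List ℕ) : List ℕ := w.map (fun x => if d < x then x - 1 else x)

lemma mem_dW_set (w : List ℕ) :
    (w.length + 1) ∈ {i | 1 ≤ i ∧ w.countP (fun x => decide (x ≤ i)) < i} := by
  refine ⟨by omega, ?_⟩
  have : w.countP (fun x => decide (x ≤ w.length + 1)) ≤ w.length := List.countP_le_length
  omega

lemma decAbove_sum_lt {w : List ℕ} (h : dW w ≠ w.length + 1) :
    (decAbove (dW w) w).sum < w.sum := by
  have hmem : 1 ≤ dW w ∧ w.countP (fun x => decide (x ≤ dW w)) < dW w := Nat.sInf_mem (⟨_, mem_dW_set w⟩ : Set.Nonempty _)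
  have hle : dW w ≤ w.length + 1 := Nat.sInf_le (mem_dW_set w)
  obtain ⟨h1, h2⟩ := hmem
  have hlen : dW w ≤ w.length := by omega
  -- there is a letter strictly greater than `dW w`
  have hx : ∃ x ∈ w, ¬ (x ≤ dW w) := by
    by_contra hc
    push_neg at hc
    have : w.countP (fun x => decide (x ≤ dW w)) = w.length := by
      rw [List.countP_eq_length]
      intro a ha
      simpa using hc a ha
    omega
  obtain ⟨x, hxw, hxd⟩ := hx
  have := List.sum_lt_sum (l := w) (f := fun y => if dW w < y then y - 1 else y) (g := id)
    (fun i _ => by dsimp; split <;> omega)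
    ⟨x, hxw, by dsimp; rw [if_pos (by omega)]; omega⟩
  simpa [decAbove] using this

/-- The parkization `Park(w)` of a word `w` over the positive integers. -/
noncomputable def park (w : List ℕ) : List ℕ :=
  if h : dW w = w.length + 1 then w
  else
    have : (decAbove (dW w) w).sum < w.sum := decAbove_sum_lt h
    park (decAbove (dW w) w)
termination_by w.sum

/-- The standardization `Std(w)`: its `i`-th letter is `#{j : wⱼ ≤ wᵢ}`. -/
def stdW (w : List ℕ) : List ℕ := w.map (fun x => w.countP (fun y => decide (y ≤ x)))

/-- `v[k]`: shift every letter of `v` by `k`. -/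
def shiftW (k : ℕ) (v : List ℕ) : List ℕ := v.map (· + k)

/-- Shifted concatenation `u • v = u · v[k]`, `k = |u|`. -/
def sconc (u v : List ℕ) : List ℕ := u ++ shiftW u.length v

/-- The multiset of all shuffles of two words, counted with multiplicity. -/
def shuffles : List ℕ → List ℕ → Multiset (List ℕ)
  | [], v => {v}
  | x :: u, [] => {x :: u}
  | x :: u, y :: v =>
      (shuffles u (y :: v)).map (fun w => x :: w) + (shuffles (x :: u) v).map (fun w => y :: w)
termination_by u v => u.length + v.length

/-- Shifted shuffle `u ⋒ v`, a multiset of words. -/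
def sshuffle (u v : List ℕ) : Multiset (List ℕ) := shuffles u (shiftW u.length v)

/-- Iterated shifted shuffle `u₁ ⋒ u₂ ⋒ ⋯ ⋒ u_r`. -/
def itersShuffle : List (List ℕ) → Multiset (List ℕ)
  | [] => {[]}
  | u :: rest => (itersShuffle rest).bind (fun v => sshuffle u v)

/-- Lexicographic pair-encoding `a ⊛ b` of two words of length `n` with letters in `[n]`:
the `i`-th letter is `(aᵢ - 1)·n + bᵢ`. -/
def pairEnc (n : ℕ) (a b : List ℕ) : List ℕ := List.zipWith (fun x y => (x - 1) * n + y) a b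

/-- The internal product `a * b := Park(a ⊛ b)` of two parking functions of the same length. -/
noncomputable def iprod (a b : List ℕ) : List ℕ := park (pairEnc a.length a b)

/-- The word `1^m` of length `m` with all letters equal to `1`. -/
def onesW (m : ℕ) : List ℕ := List.replicate m 1

/-- The multiset (without repetition) of all words `a` with `a↑ = π`. -/
def classM (π : List ℕ) : Multiset (List ℕ) :=
  (↑(π.permutations.dedup) : Multiset (List ℕ)).filter (fun a => sortW a = π)

open Classical in
/-- The finite set of all parking functions of length `n`. -/
noncomputable def PFfin (n : ℕ) : Finset (List ℕ) :=
  ((Finset.univ : Finset (Fin n → Fin n)).image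
    (fun f => List.ofFn (fun i => (f i : ℕ) + 1))).filter IsPF

/-- Split a word into consecutive factors of the given lengths. -/
def splitFactors : List ℕ → List ℕ → List (List ℕ)
  | [], _ => []
  | k :: ks, e => e.take k :: splitFactors ks (e.drop k)

/-- Iterated shifted concatenation. -/
def sconcAll : List (List ℕ) → List ℕ
  | [] => []
  | u :: rest => sconc u (sconcAll rest)

/-- Multiset of tuples `(a₁, …, a_r)` (as lists) with `aᵢ↑ = πᵢ`. -/
def tuplesM : List (List ℕ) → Multiset (List (List ℕ))
  | [] => {[]}
  | p :: ps => (classM p).bind (fun a => (tuplesM ps).map (fun A => a :: A))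

/-- `π'` is a successor of `π`: the evaluation of `π'` is obtained from that of `π`
by merging two consecutive (modulo zeros) nonzero entries onto the left one. -/
def IsSuccEv (π π' : List ℕ) : Prop :=
  ∃ i j : ℕ, 1 ≤ i ∧ i < j ∧ π.count i ≠ 0 ∧ π.count j ≠ 0 ∧
    (∀ k, i < k → k < j → π.count k = 0) ∧
    (∀ m, π'.count m = if m = i then π.count i + π.count j else if m = j then 0 else π.count m)

/-- The partial order `π ⪯ π'`: reflexive–transitive closure of the successor relation. -/
def succeq (π π' : List ℕ) : Prop := Relation.ReflTransGen IsSuccEv π π'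

/-!
For a word `a` of positive letters and length `n`, `a ⊛ 1ⁿ` replaces each letter `x` by
`(x - 1)·n + 1`: the relative order is kept and distinct letters end up at least `n` apart.
Parkization then only closes gaps, and it stops when each letter `x` has become its rank
`1 + #{y ∈ a : y < x}`. The invariant behind this: every letter is at least its rank, and the
excess `x - rank x` is monotone in `x`. If `X` is the least letter with positive excess, then
`d(w)` is the rank of `X`, no letter equals `d(w)`, and decrementing the letters above it
preserves the invariant and all ranks. So `a * 1ⁿ` is the rank word of `a`. A rank word is its
own rank word, and so is every word of `1^{m₁} ⋒ ⋯ ⋒ 1^{m_r}`; hence both are fixed by `_ * 1ⁿ`.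
-/

def letterRank (w : List ℕ) (x : ℕ) : ℕ := w.countP (· < x) + 1

section letterRank

variable {w : List ℕ} {x y : ℕ}

lemma letterRank_mono (h : x ≤ y) : letterRank w x ≤ letterRank w y := by
  have : w.countP (· < x) ≤ w.countP (· < y) :=
    countP_mono_left fun z _ hz => by simp only [decide_eq_true_eq] at hz ⊢; omega
  unfold letterRank; omega

lemma letterRank_le_length_succ : letterRank w x ≤ w.length + 1 :=
  Nat.succ_le_succ countP_le_length

lemma letterRank_le_length (hx : x ∈ w) : letterRank w x ≤ w.length :=
  countP_lt_length_iff.mpr ⟨x, hx, by simp⟩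

lemma letterRank_lt_letterRank (hx : x ∈ w) (hxy : x < y) :
    letterRank w x < letterRank w y := by
  unfold letterRank
  induction w with
  | nil => simp at hx
  | cons a t ih =>
    have hmono : t.countP (· < x) ≤ t.countP (· < y) :=
      countP_mono_left fun z _ hz => by simp only [decide_eq_true_eq] at hz ⊢; omega
    rcases mem_cons.mp hx with rfl | ht
    · simp [hxy]
      omega
    · have := ih ht
      simp only [countP_cons, decide_eq_true_eq]
      split_ifs <;> omega

lemma letterRank_lt_letterRank_iff (hx : x ∈ w) : letterRank w x < letterRank w y ↔ x < y :=
  ⟨fun h => lt_of_not_ge fun hyx => (letterRank_mono hyx).not_gt h, letterRank_lt_letterRank hx⟩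

lemma letterRank_map {f : ℕ → ℕ} (hf : ∀ y ∈ w, f y < f x ↔ y < x) :
    letterRank (w.map f) (f x) = letterRank w x := by
  simp only [letterRank, countP_map]
  exact congrArg (· + 1) (countP_congr fun y hy => by simpa using hf y hy)

lemma letterRank_perm {w' : List ℕ} (h : w ~ w') : letterRank w = letterRank w' := by
  funext x
  simp only [letterRank, h.countP_eq]

end letterRank

def IsRankFixed (w : List ℕ) : Prop := ∀ x ∈ w, letterRank w x = x

namespace IsRankFixed

variable {w : List ℕ}

lemma one_le (h : IsRankFixed w) {x : ℕ} (hx : x ∈ w) : 1 ≤ x :=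
  h x hx ▸ Nat.succ_pos _

lemma map_letterRank (h : IsRankFixed w) : w.map (letterRank w) = w :=
  (map_congr_left h).trans (map_id w)

lemma perm (h : IsRankFixed w) {w' : List ℕ} (hw : w ~ w') : IsRankFixed w' := fun x hx => by
  rw [← letterRank_perm hw]
  exact h x (hw.mem_iff.mpr hx)

lemma sconc {u v : List ℕ} (hu : IsRankFixed u) (hv : IsRankFixed v) :
    IsRankFixed (sconc u v) := by
  have hu_le : ∀ x ∈ u, x ≤ u.length := fun x hx => hu x hx ▸ letterRank_le_length hx
  intro z hz
  rcases mem_append.mp hz with hzu | hzv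
  · have hshift : (shiftW u.length v).countP (· < z) = 0 := by
      rw [shiftW, countP_eq_zero]
      intro y hy
      obtain ⟨y, hyv, rfl⟩ := mem_map.mp hy
      have := hv.one_le hyv
      have := hu_le z hzu
      simp only [decide_eq_true_eq]; omega
    have := hu z hzu
    simp only [letterRank, _root_.sconc, countP_append, hshift] at this ⊢
    omega
  · obtain ⟨y, hyv, rfl⟩ := mem_map.mp hzv
    have hy := hv.one_le hyv
    have hfull : u.countP (· < y + u.length) = u.length :=
      countP_eq_length.mpr fun x hx => by have := hu_le x hx; simp only [decide_eq_true_eq]; omega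
    have hshift : (shiftW u.length v).countP (· < y + u.length) = v.countP (· < y) := by
      rw [shiftW, countP_map]
      exact countP_congr fun x _ => by simp
    have := hv y hyv
    simp only [letterRank, _root_.sconc, countP_append, hfull, hshift] at this ⊢
    omega

end IsRankFixed

lemma isRankFixed_map_letterRank (a : List ℕ) : IsRankFixed (a.map (letterRank a)) := by
  simp only [IsRankFixed, forall_mem_map]
  exact fun x _ => letterRank_map fun y hy => letterRank_lt_letterRank_iff hy

lemma isRankFixed_onesW (m : ℕ) : IsRankFixed (onesW m) := by
  intro x hx
  obtain rfl := (mem_replicate.mp hx).2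
  simp [letterRank, onesW, countP_replicate]

lemma perm_append_of_mem_shuffles : ∀ (u v w : List ℕ), w ∈ shuffles u v → w ~ u ++ v := by
  intro u v
  induction u, v using shuffles.induct with
  | case1 v => simp [shuffles]
  | case2 x u => simp [shuffles]
  | case3 x u y v ih₁ ih₂ =>
    intro w hw
    simp only [shuffles, Multiset.mem_add, Multiset.mem_map] at hw
    rcases hw with ⟨w', hw', rfl⟩ | ⟨w', hw', rfl⟩
    · exact (ih₁ w' hw').cons x
    · exact ((ih₂ w' hw').cons y).trans perm_middle.symm

lemma isRankFixed_of_mem_itersShuffle :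
    ∀ {us : List (List ℕ)}, (∀ u ∈ us, IsRankFixed u) →
      ∀ c ∈ itersShuffle us, IsRankFixed c ∧ c.length = (us.map length).sum
  | [], _, c, hc => by simp_all [itersShuffle, IsRankFixed]
  | u :: us, hus, c, hc => by
    simp only [itersShuffle, Multiset.mem_bind] at hc
    obtain ⟨v, hv, hcv⟩ := hc
    obtain ⟨hvfix, hvlen⟩ :=
      isRankFixed_of_mem_itersShuffle (fun u' hu' => hus u' (mem_cons_of_mem _ hu')) v hv
    have hperm : c ~ sconc u v := perm_append_of_mem_shuffles _ _ c hcv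
    refine ⟨((hus u mem_cons_self).sconc hvfix).perm hperm.symm, ?_⟩
    simp [hperm.length_eq, sconc, shiftW, hvlen]

lemma dW_eq {w : List ℕ} {d : ℕ} (hd : 1 ≤ d) (hlt : w.countP (· ≤ d) < d)
    (hge : ∀ i, 1 ≤ i → i < d → i ≤ w.countP (· ≤ i)) : dW w = d :=
  le_antisymm (Nat.sInf_le ⟨hd, hlt⟩) <| le_csInf ⟨_, mem_dW_set w⟩ fun i ⟨hi, hlti⟩ =>
    le_of_not_gt fun hid => (hge i hi hid).not_gt hlti

-- The least letter `z > i` sees exactly the letters `≤ i` below it.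
lemma le_countP_le {w : List ℕ} {i : ℕ} (hi : i ≤ w.length)
    (h : ∀ z ∈ w, i < z → i < letterRank w z) : i ≤ w.countP (· ≤ i) := by
  by_cases hex : ∃ z, z ∈ w ∧ i < z
  · obtain ⟨hz, hiz⟩ := Nat.find_spec hex
    have hcount : w.countP (· ≤ i) = w.countP (· < Nat.find hex) :=
      countP_congr fun y hy => by
        simp only [decide_eq_true_eq]
        exact ⟨fun hyi => by omega, fun hyz => not_lt.mp fun hiy => Nat.find_min hex hyz ⟨hy, hiy⟩⟩
    have := h _ hz hiz
    rw [letterRank] at this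
    omega
  · push Not at hex
    rw [countP_eq_length.mpr fun y hy => by simpa using hex y hy]
    exact hi

lemma IsRankFixed.dW_eq {w : List ℕ} (h : IsRankFixed w) : dW w = w.length + 1 :=
  _root_.dW_eq (by omega) (countP_le_length.trans_lt (by omega)) fun i _ hi =>
    le_countP_le (by omega) fun z hz hiz => (h z hz).symm ▸ hiz

def IsSpread (w : List ℕ) : Prop :=
  (∀ x ∈ w, letterRank w x ≤ x) ∧
    ∀ x ∈ w, ∀ y ∈ w, x ≤ y → letterRank w y + x ≤ letterRank w x + y

def decLetter (d x : ℕ) : ℕ := if d < x then x - 1 else x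

lemma decAbove_eq_map (d : ℕ) (w : List ℕ) : decAbove d w = w.map (decLetter d) := rfl

lemma decLetter_lt_decLetter_iff {d x y : ℕ} (hx : x ≠ d) (hy : y ≠ d) :
    decLetter d x < decLetter d y ↔ x < y := by
  unfold decLetter
  split_ifs <;> omega

/-! `X` stands for the least letter of a spread word `w` whose rank is below it. -/

section pivot

variable {w : List ℕ} {X z : ℕ}

lemma IsSpread.letterRank_lt_self (hw : IsSpread w) (hX : X ∈ w) (hXlt : letterRank w X < X)
    (hz : z ∈ w) (hXz : X ≤ z) : letterRank w z < z := by
  have := hw.2 X hX z hz hXz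
  omega

lemma IsSpread.letterRank_pivot_lt (hw : IsSpread w) (hX : X ∈ w) (hXlt : letterRank w X < X)
    (hz : z ∈ w) (hXz : X ≤ z) : letterRank w X < z :=
  (letterRank_mono hXz).trans_lt (hw.letterRank_lt_self hX hXlt hz hXz)

lemma lt_letterRank_pivot (hbelow : ∀ z ∈ w, z < X → letterRank w z = z) (hz : z ∈ w)
    (hzX : z < X) : z < letterRank w X :=
  hbelow z hz hzX ▸ letterRank_lt_letterRank hz hzX

lemma IsSpread.ne_letterRank_pivot (hw : IsSpread w) (hX : X ∈ w)
    (hXlt : letterRank w X < X) (hbelow : ∀ z ∈ w, z < X → letterRank w z = z) (hz : z ∈ w) :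
    z ≠ letterRank w X := by
  rcases lt_or_ge z X with hzX | hXz
  · exact (lt_letterRank_pivot hbelow hz hzX).ne
  · exact (hw.letterRank_pivot_lt hX hXlt hz hXz).ne'

lemma IsSpread.dW_eq_letterRank_pivot (hw : IsSpread w) (hX : X ∈ w)
    (hXlt : letterRank w X < X) (hbelow : ∀ z ∈ w, z < X → letterRank w z = z) :
    dW w = letterRank w X := by
  have hcount : w.countP (· ≤ letterRank w X) = w.countP (· < X) :=
    countP_congr fun z hz => by
      simp only [decide_eq_true_eq]
      exact ⟨fun h => lt_of_not_ge fun hXz => (hw.letterRank_pivot_lt hX hXlt hz hXz).not_ge h,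
        fun h => (lt_letterRank_pivot hbelow hz h).le⟩
  refine dW_eq (Nat.succ_pos _) (by rw [hcount, letterRank]; omega) fun i _ hi => ?_
  refine le_countP_le (hi.le.trans (letterRank_le_length hX)) fun z hz hiz => ?_
  rcases lt_or_ge z X with hzX | hXz
  · rwa [hbelow z hz hzX]
  · exact hi.trans_le (letterRank_mono hXz)

lemma IsSpread.letterRank_decAbove_pivot (hw : IsSpread w) (hX : X ∈ w)
    (hXlt : letterRank w X < X) (hbelow : ∀ z ∈ w, z < X → letterRank w z = z) (hz : z ∈ w) :
    letterRank (decAbove (letterRank w X) w) (decLetter (letterRank w X) z) = letterRank w z :=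
  letterRank_map fun _ hy => decLetter_lt_decLetter_iff
    (hw.ne_letterRank_pivot hX hXlt hbelow hy) (hw.ne_letterRank_pivot hX hXlt hbelow hz)

lemma IsSpread.decAbove_pivot (hw : IsSpread w) (hX : X ∈ w) (hXlt : letterRank w X < X)
    (hbelow : ∀ z ∈ w, z < X → letterRank w z = z) :
    IsSpread (decAbove (letterRank w X) w) := by
  have hne : ∀ z ∈ w, z ≠ letterRank w X := fun z hz => hw.ne_letterRank_pivot hX hXlt hbelow hz
  have hrank : ∀ z ∈ w, letterRank (w.map (decLetter (letterRank w X))) (decLetter _ z) =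
      letterRank w z := fun z hz => hw.letterRank_decAbove_pivot hX hXlt hbelow hz
  have hdec : ∀ z ∈ w, decLetter (letterRank w X) z = if X ≤ z then z - 1 else z := by
    intro z hz
    rcases lt_or_ge z X with hzX | hXz
    · simp [decLetter, hzX, not_lt.mpr (lt_letterRank_pivot hbelow hz hzX).le]
    · simp [decLetter, hXz, hw.letterRank_pivot_lt hX hXlt hz hXz]
  rw [decAbove_eq_map]
  simp only [IsSpread, forall_mem_map]
  refine ⟨fun x hx => ?_, fun x hx y hy hxy => ?_⟩
  · rw [hrank x hx, hdec x hx]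
    split_ifs with hXx
    · have := hw.letterRank_lt_self hX hXlt hx hXx
      omega
    · exact (hbelow x hx (not_le.mp hXx)).le
  · have hxy' : x ≤ y := not_lt.mp fun hyx =>
      ((decLetter_lt_decLetter_iff (hne y hy) (hne x hx)).mpr hyx).not_ge hxy
    have := hw.2 x hx y hy hxy'
    rw [hrank x hx, hrank y hy, hdec x hx, hdec y hy]
    split_ifs with hXx hXy hXy
    · omega
    · omega
    · have := hw.letterRank_lt_self hX hXlt hy hXy
      have := hbelow x hx (not_le.mp hXx)
      omega
    · omega

end pivot

theorem park_eq_map_letterRank (w : List ℕ) (hw : IsSpread w) : park w = w.map (letterRank w) := by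
  induction hs : w.sum using Nat.strong_induction_on generalizing w with
  | _ s ih =>
  by_cases hfix : IsRankFixed w
  · rw [park, dif_pos hfix.dW_eq, hfix.map_letterRank]
  have hex : ∃ X, X ∈ w ∧ letterRank w X < X := by
    simp only [IsRankFixed, not_forall] at hfix
    obtain ⟨X, hX, hne⟩ := hfix
    exact ⟨X, hX, lt_of_le_of_ne (hw.1 X hX) hne⟩
  obtain ⟨hX, hXlt⟩ := Nat.find_spec hex
  have hbelow : ∀ z ∈ w, z < Nat.find hex → letterRank w z = z := fun z hz hzX =>
    le_antisymm (hw.1 z hz) (not_lt.mp fun h => Nat.find_min hex hzX ⟨hz, h⟩)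
  have hdW := hw.dW_eq_letterRank_pivot hX hXlt hbelow
  have hdne : dW w ≠ w.length + 1 := by
    have := letterRank_le_length hX
    omega
  have hsum := decAbove_sum_lt hdne
  rw [hdW] at hsum
  rw [park, dif_neg hdne]
  simp only [hdW]
  rw [ih _ (hs ▸ hsum) _ (hw.decAbove_pivot hX hXlt hbelow) rfl, decAbove_eq_map, map_map]
  exact map_congr_left fun z hz => hw.letterRank_decAbove_pivot hX hXlt hbelow hz

lemma pairEnc_onesW (n : ℕ) (a : List ℕ) :
    pairEnc n a (onesW a.length) = a.map (fun x => (x - 1) * n + 1) := by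
  induction a with
  | nil => rfl
  | cons x t ih =>
    simp only [pairEnc, onesW] at ih ⊢
    rw [length_cons, replicate_succ, zipWith_cons_cons, ih, map_cons]

lemma letterRank_map_scale {a : List ℕ} {n x : ℕ} (hpos : ∀ x ∈ a, 1 ≤ x) (hlen : a.length ≤ n)
    (hx : x ∈ a) :
    letterRank (a.map (fun x => (x - 1) * n + 1)) ((x - 1) * n + 1) = letterRank a x := by
  have hn : 0 < n := (length_pos_of_mem hx).trans_le hlen
  refine letterRank_map fun y hy => ?_
  have := hpos x hx
  have := hpos y hy
  rw [add_lt_add_iff_right, Nat.mul_lt_mul_right hn]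
  omega

lemma isSpread_map_scale {a : List ℕ} {n : ℕ} (hpos : ∀ x ∈ a, 1 ≤ x) (hlen : a.length ≤ n) :
    IsSpread (a.map (fun x => (x - 1) * n + 1)) := by
  simp only [IsSpread, forall_mem_map]
  refine ⟨fun x hx => ?_, fun x hx y hy hxy => ?_⟩
  · rw [letterRank_map_scale hpos hlen hx]
    rcases (hpos x hx).eq_or_lt with rfl | hx1
    · have : a.countP (· < 1) = 0 :=
        countP_eq_zero.mpr fun y hy => by have := hpos y hy; simp only [decide_eq_true_eq]; omega
      rw [letterRank, this]
      simp
    · have := letterRank_le_length_succ (w := a) (x := x)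
      have : n ≤ (x - 1) * n := Nat.le_mul_of_pos_left n (by omega)
      omega
  · rw [letterRank_map_scale hpos hlen hx, letterRank_map_scale hpos hlen hy]
    have hn : 0 < n := (length_pos_of_mem hx).trans_le hlen
    have hxy' : x ≤ y := by
      by_contra hyx
      have := hpos y hy
      have : (y - 1) * n < (x - 1) * n := (Nat.mul_lt_mul_right hn).mpr (by omega)
      omega
    rcases hxy'.eq_or_lt with rfl | hlt
    · rfl
    have : (x - 1) * n + n ≤ (y - 1) * n := by
      have := hpos x hx
      rw [← Nat.succ_mul]
      exact Nat.mul_le_mul_right n (by omega)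
    have := letterRank_le_length_succ (w := a) (x := y)
    have : 1 ≤ letterRank a x := Nat.succ_pos _
    omega

theorem iprod_onesW (a : List ℕ) (n : ℕ) (hpos : ∀ x ∈ a, 1 ≤ x) (hlen : a.length = n) :
    iprod a (onesW n) = a.map (letterRank a) := by
  subst hlen
  rw [iprod, pairEnc_onesW, park_eq_map_letterRank _ (isSpread_map_scale hpos le_rfl), map_map]
  exact map_congr_left fun x hx => letterRank_map_scale hpos le_rfl hx

lemma IsRankFixed.iprod_onesW {c : List ℕ} {n : ℕ} (h : IsRankFixed c) (hlen : c.length = n) :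
    iprod c (onesW n) = c :=
  (_root_.iprod_onesW c n (fun _ => h.one_le) hlen).trans h.map_letterRank

/-- `(a * 1ⁿ) * 1ⁿ = a * 1ⁿ` for every `a ∈ PF_n`, and for every
composition `(m₁, …, m_r)` of `n`, the multiset `{c * 1ⁿ : c ∈ 1^{m₁} ⋒ ⋯ ⋒ 1^{m_r}}`
equals `1^{m₁} ⋒ ⋯ ⋒ 1^{m_r}` itself (so `f ↦ f * J_n` is a projector onto `Sym_n`). -/
theorem star_Jn_projector (n : ℕ) :
    (∀ a : List ℕ, IsPF a → a.length = n →
        iprod (iprod a (onesW n)) (onesW n) = iprod a (onesW n)) ∧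
    (∀ ms : List ℕ, (∀ m ∈ ms, 1 ≤ m) → ms.sum = n →
        (itersShuffle (ms.map onesW)).map (fun c => iprod c (onesW n))
          = itersShuffle (ms.map onesW)) := by
  refine ⟨fun a ha hlen => ?_, fun ms _ hsum => ?_⟩
  · rw [iprod_onesW a n ha.1 hlen]
    exact (isRankFixed_map_letterRank a).iprod_onesW (by rw [length_map, hlen])
  · conv_rhs => rw [← Multiset.map_id' (itersShuffle _)]
    refine Multiset.map_congr rfl fun c hc => ?_
    obtain ⟨hfix, hlen⟩ :=
      isRankFixed_of_mem_itersShuffle (forall_mem_map.mpr fun m _ => isRankFixed_onesW m) c hc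
    exact hfix.iprod_onesW (by simpa [hsum, Function.comp_def, onesW] using hlen)
end

section
/- For every word w of length n over the positive integers and every 0 ≤ k ≤ n, one has Park(Park(w)_1⋯Park(w)_k) = Park(w_1⋯w_k) and Park(Park(w)_{k+1}⋯Park(w)_n) = Park(w_{k+1}⋯w_n); i.e. the parkizations of the prefix and suffix of a word coincide with the parkizations of the corresponding prefix and suffix of its parkization. (This is the combinatorial content of the fact that the polynomials G_a(A) = Σ_{Park(w)=a} w realize the algebra PQSym*, i.e. satisfy G_{a'}(A) G_{a''}(A) = Σ_{a ∈ a' * a''} G_a(A).) -/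
open List

/-! Parkization is a sequence of steps `w ↦ decAbove (dW w) w`, so it suffices to show that one
such step of `w` does not change the parkization of any sub-multiset `u` of `w` (such as a prefix
or a suffix). With `d = dW w`, the
minimality of `d` forces `u` to have fewer than `d - i` letters in every interval `(i, d]`. Under
this sparseness, `park (decAbove d u) = park u` by induction: if `e = dW u` equals `d` this is the
first step of `park u`; if `e < d`, the step at `e` commutes with the decrement at `d`, becoming a
decrement at `d - 1` of `decAbove e u`, which is again sparse below `d - 1`. -/

def countLe (w : List ℕ) (i : ℕ) : ℕ := w.countP (fun x => decide (x ≤ i))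

lemma countLe_mono (w : List ℕ) {i j : ℕ} (h : i ≤ j) : countLe w i ≤ countLe w j :=
  List.countP_mono_left fun x _ hx => by simp only [decide_eq_true_eq] at hx ⊢; omega

lemma countLe_zero {w : List ℕ} (hw : ∀ x ∈ w, 1 ≤ x) : countLe w 0 = 0 :=
  List.countP_eq_zero.mpr fun x hx => by simp only [decide_eq_true_eq]; have := hw x hx; omega

lemma countLe_le_length (w : List ℕ) (i : ℕ) : countLe w i ≤ w.length :=
  List.countP_le_length

lemma List.Subperm.countLe_add_le {u w : List ℕ} (h : u <+~ w) {i j : ℕ} (hij : i ≤ j) :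
    countLe u j + countLe w i ≤ countLe w j + countLe u i := by
  obtain ⟨l, hlu, hlw⟩ := h
  obtain ⟨r, hr⟩ := hlw.exists_perm_append
  have hw : ∀ k, countLe w k = countLe u k + countLe r k := fun k => by
    rw [countLe, hr.countP_eq, List.countP_append, hlu.countP_eq]; rfl
  have := countLe_mono r hij
  rw [hw, hw]
  omega

lemma countLe_decAbove_of_lt {d i : ℕ} (h : i < d) (u : List ℕ) :
    countLe (decAbove d u) i = countLe u i := by
  rw [countLe, decAbove, List.countP_map]
  exact List.countP_congr fun x _ => by simp only [Function.comp, decide_eq_true_eq]; split <;> omega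

lemma countLe_decAbove_of_le {d i : ℕ} (h : d ≤ i) (u : List ℕ) :
    countLe (decAbove d u) i = countLe u (i + 1) := by
  rw [countLe, decAbove, List.countP_map]
  exact List.countP_congr fun x _ => by simp only [Function.comp, decide_eq_true_eq]; split <;> omega

lemma length_decAbove (d : ℕ) (w : List ℕ) : (decAbove d w).length = w.length :=
  List.length_map _

lemma decAbove_eq_self {d : ℕ} {u : List ℕ} (h : ∀ x ∈ u, x ≤ d) : decAbove d u = u :=
  (List.map_congr_left (g := id) fun x hx => by simp [Nat.not_lt.mpr (h x hx)]).trans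
    (List.map_id u)

lemma decAbove_decAbove_of_lt {e d : ℕ} (h : e < d) (u : List ℕ) :
    decAbove e (decAbove d u) = decAbove (d - 1) (decAbove e u) := by
  simp only [decAbove, List.map_map]
  exact List.map_congr_left fun x _ => by simp only [Function.comp]; split_ifs <;> omega

lemma one_le_of_mem_decAbove {d : ℕ} {u : List ℕ} (hd : 1 ≤ d) (hu : ∀ x ∈ u, 1 ≤ x) :
    ∀ x ∈ decAbove d u, 1 ≤ x := by
  simp only [decAbove, List.mem_map]
  rintro _ ⟨y, hy, rfl⟩
  have := hu y hy
  split <;> omega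

lemma one_le_dW (w : List ℕ) : 1 ≤ dW w :=
  (Nat.sInf_mem ⟨_, mem_dW_set w⟩).1

lemma countLe_dW_lt (w : List ℕ) : countLe w (dW w) < dW w :=
  (Nat.sInf_mem ⟨_, mem_dW_set w⟩).2

lemma dW_le {w : List ℕ} {d : ℕ} (h1 : 1 ≤ d) (h2 : countLe w d < d) : dW w ≤ d :=
  Nat.sInf_le ⟨h1, h2⟩

lemma le_countLe_of_lt_dW {w : List ℕ} {i : ℕ} (h : i < dW w) : i ≤ countLe w i := by
  by_contra! h'
  have := dW_le (w := w) (d := i) (by omega) h'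
  omega

lemma le_length_of_dW_eq {w : List ℕ} (h : dW w = w.length + 1) : ∀ x ∈ w, x ≤ w.length := by
  have hall : countLe w w.length = w.length :=
    le_antisymm (countLe_le_length w _) (le_countLe_of_lt_dW (by omega))
  intro x hx
  simpa using List.countP_eq_length.mp hall x hx

lemma dW_decAbove_of_lt {u : List ℕ} {d : ℕ} (h : dW u < d) : dW (decAbove d u) = dW u := by
  apply le_antisymm
  · exact dW_le (one_le_dW u) (countLe_decAbove_of_lt h u ▸ countLe_dW_lt u)
  · by_contra! hlt
    have := countLe_dW_lt (decAbove d u)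
    rw [countLe_decAbove_of_lt (hlt.trans h)] at this
    have := le_countLe_of_lt_dW hlt
    omega

lemma park_of_eq {w : List ℕ} (h : dW w = w.length + 1) : park w = w := by
  rw [park, dif_pos h]

lemma park_of_ne {w : List ℕ} (h : dW w ≠ w.length + 1) :
    park w = park (decAbove (dW w) w) := by
  rw [park, dif_neg h]

/-- `u` has fewer than `d - i` letters in each interval `(i, d]`, `i < d` (written additively
to avoid truncated subtraction). -/
def SparseBelow (u : List ℕ) (d : ℕ) : Prop :=
  ∀ i < d, countLe u d + i < d + countLe u i

namespace SparseBelow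

lemma countLe_lt {u : List ℕ} {d : ℕ} (hK : SparseBelow u d) (hu : ∀ x ∈ u, 1 ≤ x)
    (hd : 1 ≤ d) : countLe u d < d := by
  have := hK 0 hd
  rwa [countLe_zero hu, Nat.add_zero, Nat.add_zero] at this

lemma decAbove_dW {u : List ℕ} {d : ℕ} (hK : SparseBelow u d) (hlt : dW u < d) :
    SparseBelow (decAbove (dW u) u) (d - 1) := by
  intro i hi
  rw [countLe_decAbove_of_le (by omega), Nat.sub_add_cancel (by omega)]
  rcases Nat.lt_or_ge i (dW u) with hie | hie
  · have hd := hK (dW u) hlt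
    have := countLe_dW_lt u
    have := le_countLe_of_lt_dW hie
    rw [countLe_decAbove_of_lt hie]
    omega
  · have := hK (i + 1) (by omega)
    rw [countLe_decAbove_of_le hie]
    omega

end SparseBelow

lemma sparseBelow_dW_of_subperm {u w : List ℕ} (h : u <+~ w) : SparseBelow u (dW w) := by
  intro i hi
  have := h.countLe_add_le hi.le
  have := countLe_dW_lt w
  have := le_countLe_of_lt_dW hi
  omega

theorem park_decAbove_of_sparseBelow {u : List ℕ} {d : ℕ} (hu : ∀ x ∈ u, 1 ≤ x) (hd : 1 ≤ d)
    (hK : SparseBelow u d) : park (decAbove d u) = park u := by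
  by_cases hx : ∃ x ∈ u, d < x
  swap
  · push Not at hx
    rw [decAbove_eq_self hx]
  obtain ⟨x, hxu, hdx⟩ := hx
  have hle : dW u ≤ d := dW_le hd (hK.countLe_lt hu hd)
  have hne : dW u ≠ u.length + 1 := fun h => by have := le_length_of_dW_eq h x hxu; omega
  rcases hle.eq_or_lt with heq | hlt
  · rw [park_of_ne hne, heq]
  have hne' : dW (decAbove d u) ≠ (decAbove d u).length + 1 := by
    rwa [dW_decAbove_of_lt hlt, length_decAbove]
  have := decAbove_sum_lt hne
  calc park (decAbove d u) = park (decAbove (dW u) (decAbove d u)) := by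
        rw [park_of_ne hne', dW_decAbove_of_lt hlt]
    _ = park (decAbove (d - 1) (decAbove (dW u) u)) := by rw [decAbove_decAbove_of_lt hlt]
    _ = park (decAbove (dW u) u) :=
        park_decAbove_of_sparseBelow (one_le_of_mem_decAbove (one_le_dW u) hu)
          (by have := one_le_dW u; omega) (hK.decAbove_dW hlt)
    _ = park u := (park_of_ne hne).symm
termination_by u.sum

theorem park_apply_park {f : List ℕ → List ℕ}
    (hf : ∀ d w, f (decAbove d w) = decAbove d (f w)) (hsub : ∀ w, f w <+~ w)
    {w : List ℕ} (hw : ∀ x ∈ w, 1 ≤ x) : park (f (park w)) = park (f w) := by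
  by_cases h : dW w = w.length + 1
  · rw [park_of_eq h]
  have := decAbove_sum_lt h
  rw [park_of_ne h, park_apply_park hf hsub (one_le_of_mem_decAbove (one_le_dW w) hw), hf,
    park_decAbove_of_sparseBelow (fun x hx => hw x ((hsub w).subset hx)) (one_le_dW w)
      (sparseBelow_dW_of_subperm (hsub w))]
termination_by w.sum

theorem park_prefix_suffix_general (w : List ℕ) (hw : ∀ x ∈ w, 1 ≤ x)
    (k : ℕ) :
    park ((park w).take k) = park (w.take k) ∧
      park ((park w).drop k) = park (w.drop k) :=
  ⟨park_apply_park (fun _ _ => List.map_take.symm) (fun w => (w.take_sublist k).subperm) hw,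
    park_apply_park (fun _ _ => List.map_drop.symm) (fun w => (w.drop_sublist k).subperm) hw⟩

/-- for every word `w` over the positive integers and `0 ≤ k ≤ |w|`,
the parkizations of the prefix and suffix of `w` coincide with the parkizations of the
corresponding prefix and suffix of `Park(w)`. -/
theorem park_prefix_suffix (w : List ℕ) (hw : ∀ x ∈ w, 1 ≤ x)
    (k : ℕ) (hk : k ≤ w.length) :
    park ((park w).take k) = park (w.take k) ∧
      park ((park w).drop k) = park (w.drop k) :=
  park_prefix_suffix_general w hw k
end
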